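/- Let X be a real normed space and let ac(X) := {(x_n) ∈ ℓ∞(X) : (x_n) is almost convergent to some y ∈ X}. Then ac(X) is a closed subspace of ℓ∞(X) if and only if X is complete. -/

import Mathlib

/-! If `X` is complete, the almost limit is a 1-Lipschitz function of the sequence in `ℓ∞(X)`,
so along an `ℓ∞`-convergent sequence of almost convergent sequences the almost limits form a
Cauchy sequence, and their limit is an almost limit of the limit sequence.
Conversely, a Cauchy sequence `u` in `X` is the `ℓ∞`-limit of its truncations `n ↦ u (min n j)`,
which converge and hence almost converge. If `ac(X)` is closed, `u` therefore almost converges to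
some `y`, and then `u → y`, since the averages of a Cauchy sequence over late windows stay close to
its terms. -/

open Filter Topology

def AlmostConvergentTo {E : Type*} [NormedAddCommGroup E] [NormedSpace ℝ E]
    (x : ℕ → E) (y : E) : Prop :=
  TendstoUniformly
    (fun (p n : ℕ) => ((p : ℝ) + 1)⁻¹ • ∑ k ∈ Finset.range (p + 1), x (n + k))
    (fun _ => y) atTop

open Finset
open scoped ENNReal

section Sequences

variable {E : Type*} [NormedAddCommGroup E] [NormedSpace ℝ E]

noncomputable def movingAverage (x : ℕ → E) (p n : ℕ) : E :=
  ((p : ℝ) + 1)⁻¹ • ∑ k ∈ range (p + 1), x (n + k)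

theorem almostConvergentTo_iff_tendstoUniformly {x : ℕ → E} {y : E} :
    AlmostConvergentTo x y ↔ TendstoUniformly (movingAverage x) (fun _ => y) atTop :=
  Iff.rfl

theorem movingAverage_sub (x x' : ℕ → E) (p n : ℕ) :
    movingAverage (x - x') p n = movingAverage x p n - movingAverage x' p n := by
  simp only [movingAverage, Pi.sub_apply, sum_sub_distrib, smul_sub]

theorem movingAverage_mem {s : Set E} (hs : Convex ℝ s) {x : ℕ → E} {p n : ℕ}
    (hx : ∀ k ≤ p, x (n + k) ∈ s) : movingAverage x p n ∈ s := by
  rw [movingAverage, smul_sum]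
  refine hs.sum_mem (fun _ _ => by positivity) ?_ fun k hk => hx k (by grind)
  rw [sum_const, card_range, nsmul_eq_mul, Nat.cast_succ, mul_inv_cancel₀ (by positivity)]

theorem dist_movingAverage_le {x : ℕ → E} {c : E} {C : ℝ} {p n : ℕ}
    (hx : ∀ k ≤ p, dist (x (n + k)) c ≤ C) : dist (movingAverage x p n) c ≤ C :=
  movingAverage_mem (convex_closedBall c C) hx

theorem dist_movingAverage_movingAverage_le {x x' : ℕ → E} {C : ℝ}
    (h : ∀ m, dist (x m) (x' m) ≤ C) (p n : ℕ) :
    dist (movingAverage x p n) (movingAverage x' p n) ≤ C := by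
  rw [dist_eq_norm, ← movingAverage_sub, ← dist_zero_right]
  exact dist_movingAverage_le fun k _ => by simpa [dist_eq_norm] using h (n + k)

theorem Filter.Tendsto.almostConvergentTo {x : ℕ → E} {y : E} (hx : Tendsto x atTop (𝓝 y)) :
    AlmostConvergentTo x y := by
  rw [almostConvergentTo_iff_tendstoUniformly, Metric.tendstoUniformly_iff]
  intro ε hε
  -- Windows starting late lie near `y`; the finitely many early ones are handled by Cesàro.
  obtain ⟨N, hN⟩ := Metric.tendsto_atTop.1 hx (ε / 2) (half_pos hε)
  have hhead : ∀ n, Tendsto (fun p => movingAverage x p n) atTop (𝓝 y) := fun n => by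
    have hshift : Tendsto (fun k => x (n + k)) atTop (𝓝 y) :=
      hx.comp (tendsto_atTop_mono (Nat.le_add_left · n) tendsto_id)
    simpa [movingAverage, Function.comp_def] using
      hshift.cesaro_smul.comp (tendsto_add_atTop_nat 1)
  filter_upwards [(eventually_all_finset (range N)).2 fun n _ =>
    (hhead n).eventually (Metric.ball_mem_nhds y hε)] with p hp n
  rcases lt_or_ge n N with hn | hn
  · exact dist_comm y _ ▸ hp n (mem_range.2 hn)
  · have htail : ∀ k ≤ p, dist (x (n + k)) y ≤ ε / 2 := fun k _ => (hN (n + k) (by omega)).le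
    rw [dist_comm]
    exact (dist_movingAverage_le htail).trans_lt (half_lt_self hε)

theorem AlmostConvergentTo.dist_le {x x' : ℕ → E} {y y' : E} {C : ℝ}
    (hx : AlmostConvergentTo x y) (hx' : AlmostConvergentTo x' y')
    (h : ∀ m, dist (x m) (x' m) ≤ C) : dist y y' ≤ C :=
  le_of_tendsto ((hx.tendsto_at 0).dist (hx'.tendsto_at 0))
    (Eventually.of_forall fun p => dist_movingAverage_movingAverage_le h p 0)

theorem AlmostConvergentTo.of_forall_approx {x : ℕ → E} {y : E}
    (h : ∀ ε > 0, ∃ x' y', AlmostConvergentTo x' y' ∧ (∀ m, dist (x m) (x' m) ≤ ε) ∧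
      dist y y' ≤ ε) :
    AlmostConvergentTo x y := by
  rw [almostConvergentTo_iff_tendstoUniformly, Metric.tendstoUniformly_iff]
  intro ε hε
  obtain ⟨x', y', hx', hxx', hyy'⟩ := h (ε / 3) (by positivity)
  filter_upwards [Metric.tendstoUniformly_iff.1 hx' (ε / 3) (by positivity)] with p hp n
  have hmean := dist_movingAverage_movingAverage_le hxx' p n
  have hconv : dist y' (movingAverage x' p n) < ε / 3 := hp n
  calc dist y (movingAverage x p n)
      ≤ dist y y' + dist y' (movingAverage x' p n) +
          dist (movingAverage x' p n) (movingAverage x p n) := dist_triangle4 _ _ _ _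
    _ < ε := by linarith [dist_comm (movingAverage x p n) (movingAverage x' p n)]

theorem CauchySeq.tendsto_of_almostConvergentTo {x : ℕ → E} {y : E} (hx : CauchySeq x)
    (h : AlmostConvergentTo x y) : Tendsto x atTop (𝓝 y) := by
  rw [Metric.tendsto_atTop]
  intro ε hε
  obtain ⟨p, hp⟩ := (Metric.tendstoUniformly_iff.1 h (ε / 2) (half_pos hε)).exists
  obtain ⟨N, hN⟩ := Metric.cauchySeq_iff.1 hx (ε / 2) (half_pos hε)
  refine ⟨N, fun n hn => ?_⟩
  have hmean : dist (movingAverage x p n) (x n) ≤ ε / 2 :=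
    dist_movingAverage_le fun k _ => (hN _ (by omega) _ hn).le
  calc dist (x n) y ≤ dist (movingAverage x p n) (x n) + dist (movingAverage x p n) y :=
        dist_triangle_left _ _ _
    _ < ε / 2 + ε / 2 := add_lt_add_of_le_of_lt hmean (dist_comm y _ ▸ hp n)
    _ = ε := add_halves ε

end Sequences

theorem CauchySeq.of_dist_le {α β : Type*} [PseudoMetricSpace α] [PseudoMetricSpace β]
    {f : ℕ → α} {g : ℕ → β} (hf : CauchySeq f) (h : ∀ m n, dist (g m) (g n) ≤ dist (f m) (f n)) :
    CauchySeq g := by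
  obtain ⟨b, hb₀, hb, hb_lim⟩ := cauchySeq_iff_le_tendsto_0.1 hf
  exact cauchySeq_iff_le_tendsto_0.2 ⟨b, hb₀, fun m n N hm hn => (h m n).trans (hb m n N hm hn),
    hb_lim⟩

theorem memℓp_infty_of_isBounded_range {ι : Type*} {E : Type*} [NormedAddCommGroup E]
    {u : ι → E} (hu : Bornology.IsBounded (Set.range u)) : Memℓp u ∞ := by
  obtain ⟨C, hC⟩ := isBounded_iff_forall_norm_le.1 hu
  exact memℓp_infty ⟨C, Set.forall_mem_range.2 fun i => hC _ (Set.mem_range_self i)⟩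

namespace lp

theorem dist_apply_le {ι : Type*} {E : ι → Type*} [∀ i, NormedAddCommGroup (E i)]
    {p : ℝ≥0∞} [Fact (1 ≤ p)] (f g : lp E p) (i : ι) : dist (f i) (g i) ≤ dist f g := by
  simpa only [dist_eq_norm, coeFn_sub, Pi.sub_apply] using
    norm_apply_le_norm (zero_lt_one.trans_le Fact.out).ne' (f - g) i

variable {E : Type*} [NormedAddCommGroup E]

def truncation (f : lp (fun _ : ℕ => E) ∞) (j : ℕ) : lp (fun _ : ℕ => E) ∞ :=
  ⟨fun n => f (min n j), memℓp_infty
    ⟨‖f‖, Set.forall_mem_range.2 fun _ => norm_apply_le_norm ENNReal.top_ne_zero f _⟩⟩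

@[simp]
theorem truncation_apply (f : lp (fun _ : ℕ => E) ∞) (j n : ℕ) :
    truncation f j n = f (min n j) :=
  rfl

theorem tendsto_truncation_apply (f : lp (fun _ : ℕ => E) ∞) (j : ℕ) :
    Tendsto (truncation f j) atTop (𝓝 (f j)) :=
  tendsto_atTop_of_eventually_const (i₀ := j) fun n hn => by rw [truncation_apply, min_eq_right hn]

theorem tendsto_truncation {f : lp (fun _ : ℕ => E) ∞} (hf : CauchySeq f) :
    Tendsto (truncation f) atTop (𝓝 f) := by
  rw [Metric.tendsto_atTop]
  intro ε hε
  obtain ⟨N, hN⟩ := Metric.cauchySeq_iff.1 hf (ε / 2) (half_pos hε)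
  refine ⟨N, fun j hj => ?_⟩
  have hcoord : ∀ n, ‖(truncation f j - f) n‖ ≤ ε / 2 := fun n => by
    rw [coeFn_sub, Pi.sub_apply, truncation_apply, ← dist_eq_norm]
    rcases le_total n j with h | h
    · simp only [min_eq_left h, dist_self]
      positivity
    · rw [min_eq_right h]
      exact (hN j hj n (hj.trans h)).le
  rw [dist_eq_norm]
  exact (norm_le_of_forall_le (half_pos hε).le hcoord).trans_lt (half_lt_self hε)

end lp

section Linfty

variable {E : Type*} [NormedAddCommGroup E] [NormedSpace ℝ E]

theorem AlmostConvergentTo.dist_le_dist {f g : lp (fun _ : ℕ => E) ∞} {y z : E}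
    (hf : AlmostConvergentTo f y) (hg : AlmostConvergentTo g z) : dist y z ≤ dist f g :=
  hf.dist_le hg (lp.dist_apply_le f g)

theorem isClosed_setOf_almostConvergentTo :
    IsClosed {q : lp (fun _ : ℕ => E) ∞ × E | AlmostConvergentTo q.1 q.2} := by
  refine isClosed_of_closure_subset fun q hq => AlmostConvergentTo.of_forall_approx fun ε hε => ?_
  obtain ⟨q', hq', hqq'⟩ := Metric.mem_closure_iff.1 hq ε hε
  rw [Prod.dist_eq, max_lt_iff] at hqq'
  exact ⟨q'.1, q'.2, hq', fun m => (lp.dist_apply_le _ _ m).trans hqq'.1.le, hqq'.2.le⟩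

end Linfty

/-- For a real normed space `X`, the set `ac(X)` of almost convergent sequences is a
closed subspace of `ℓ∞(X)` if and only if `X` is complete. -/
theorem stmt15 (X : Type*) [NormedAddCommGroup X] [NormedSpace ℝ X] :
    IsClosed {f : lp (fun _ : ℕ => X) ⊤ | ∃ y : X, AlmostConvergentTo (fun n => f n) y} ↔
      CompleteSpace X := by
  constructor
  · intro hclosed
    refine Metric.complete_of_cauchySeq_tendsto fun u hu => ?_
    let f : lp (fun _ : ℕ => X) ⊤ := ⟨u, memℓp_infty_of_isBounded_range hu.isBounded_range⟩
    obtain ⟨y, hy⟩ := hclosed.mem_of_tendsto (lp.tendsto_truncation (f := f) hu)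
      (Eventually.of_forall fun j => ⟨f j, (lp.tendsto_truncation_apply f j).almostConvergentTo⟩)
    exact ⟨y, hu.tendsto_of_almostConvergentTo hy⟩
  · intro _
    refine isSeqClosed_iff_isClosed.1 fun g f hg hgf => ?_
    choose y hy using hg
    obtain ⟨z, hz⟩ := cauchySeq_tendsto_of_complete
      (hgf.cauchySeq.of_dist_le fun m n => (hy m).dist_le_dist (hy n))
    exact ⟨z, isClosed_setOf_almostConvergentTo.mem_of_tendsto (hgf.prodMk_nhds hz)
      (Eventually.of_forall hy)⟩
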